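/- Let a, b ∈ k[X] be nonzero polynomials and s, t natural numbers such that d̂^s(a) ≠ 0, d̂^{s+1}(a) = 0, d̂^t(b) ≠ 0 and d̂^{t+1}(b) = 0 (i.e. ord(a) = s and ord(b) = t). Then d̂^{s+t}(a·b) ≠ 0 and d̂^{s+t+1}(a·b) = 0; that is, ord(a·b) = ord(a) + ord(b). -/
import Mathlib


open MvPolynomial Finset

/-- The derivation `d̂` on `k[x_0,…,x_n]`: `d̂(x_i) = (i+1)(n−i)·x_{i+1}` for
`0 ≤ i ≤ n−1` and `d̂(x_n) = 0`. -/
noncomputable def dhat (k : Type*) [Field k] [CharZero k] (n : ℕ) :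
    Derivation k (MvPolynomial (Fin (n + 1)) k) (MvPolynomial (Fin (n + 1)) k) :=
  mkDerivation k (fun i : Fin (n + 1) =>
    if h : (i : ℕ) = n then 0
    else ((((i : ℕ) + 1) * (n - (i : ℕ)) : ℕ) : k) •
      X (⟨(i : ℕ) + 1, by have := i.isLt; omega⟩ : Fin (n + 1)))

lemma deriv_iterate_leibniz {R A : Type*} [CommRing R] [CommRing A] [Algebra R A]
    (D : Derivation R A A) (p q : A) (n : ℕ) :
    (⇑D)^[n] (p * q) =
      ∑ i ∈ range (n + 1), n.choose i • ((⇑D)^[n - i] p * (⇑D)^[i] q) := by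
  induction n with
  | zero => simp [Finset.range]
  | succ n IH =>
    calc
      (⇑D)^[n + 1] (p * q) =
          D (∑ i ∈ range (n + 1), n.choose i • ((⇑D)^[n - i] p * (⇑D)^[i] q)) := by
        rw [Function.iterate_succ_apply', IH]
      _ = (∑ i ∈ range (n + 1),
            n.choose i • ((⇑D)^[n - i + 1] p * (⇑D)^[i] q)) +
          ∑ i ∈ range (n + 1),
            n.choose i • ((⇑D)^[n - i] p * (⇑D)^[i + 1] q) := by
        rw [map_sum]
        simp_rw [Derivation.map_smul_of_tower, Derivation.leibniz, smul_eq_mul, smul_add,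
          sum_add_distrib, Function.iterate_succ_apply']
        rw [add_comm]
        congr 1 <;> exact Finset.sum_congr rfl fun i _ => by ring
      _ = (∑ i ∈ range (n + 1),
            n.choose (i + 1) • ((⇑D)^[n - i] p * (⇑D)^[i + 1] q)) +
          1 • ((⇑D)^[n + 1] p * (⇑D)^[0] q) +
          ∑ i ∈ range (n + 1),
            n.choose i • ((⇑D)^[n - i] p * (⇑D)^[i + 1] q) := ?_
      _ = ((∑ i ∈ range (n + 1),
            n.choose i • ((⇑D)^[n - i] p * (⇑D)^[i + 1] q)) +
          ∑ i ∈ range (n + 1),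
            n.choose (i + 1) • ((⇑D)^[n - i] p * (⇑D)^[i + 1] q)) +
          1 • ((⇑D)^[n + 1] p * (⇑D)^[0] q) := by
        rw [add_comm, add_assoc]
      _ = (∑ i ∈ range (n + 1),
            (n + 1).choose (i + 1) • ((⇑D)^[n + 1 - (i + 1)] p * (⇑D)^[i + 1] q)) +
          1 • ((⇑D)^[n + 1] p * (⇑D)^[0] q) := by
        simp_rw [Nat.choose_succ_succ, Nat.succ_sub_succ, add_smul, sum_add_distrib]
      _ = ∑ i ∈ range (n + 2),
            (n + 1).choose i • ((⇑D)^[n + 1 - i] p * (⇑D)^[i] q) := by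
        rw [sum_range_succ' _ (n + 1), Nat.choose_zero_right, tsub_zero]
    congr 1
    refine (sum_range_succ' _ _).trans (congr_arg₂ (· + ·) ?_ ?_)
    · rw [sum_range_succ, Nat.choose_succ_self, zero_smul, add_zero]
      refine sum_congr rfl fun i hi => ?_
      rw [mem_range] at hi
      rw [show n - (i + 1) + 1 = n - i from by omega]
    · rw [Nat.choose_zero_right, tsub_zero]

lemma deriv_iterate_zero_of_le {R A : Type*} [CommRing R] [CommRing A] [Algebra R A]
    (D : Derivation R A A) (p : A) (m j : ℕ) (h : (⇑D)^[m] p = 0) (hm : m ≤ j) :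
    (⇑D)^[j] p = 0 := by
  obtain ⟨c, rfl⟩ := Nat.exists_eq_add_of_le hm
  rw [Nat.add_comm, Function.iterate_add_apply, h]
  exact Function.iterate_fixed (map_zero D) c

/-- The order is additive: if `ord(a) = s` and `ord(b) = t`
then `ord(a·b) = s + t`. -/
theorem ord_mul (k : Type*) [Field k] [CharZero k] (n : ℕ)
    (a b : MvPolynomial (Fin (n + 1)) k) (ha0 : a ≠ 0) (hb0 : b ≠ 0) (s t : ℕ)
    (has : (⇑(dhat k n))^[s] a ≠ 0) (has' : (⇑(dhat k n))^[s + 1] a = 0)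
    (hbt : (⇑(dhat k n))^[t] b ≠ 0) (hbt' : (⇑(dhat k n))^[t + 1] b = 0) :
    (⇑(dhat k n))^[s + t] (a * b) ≠ 0 ∧ (⇑(dhat k n))^[s + t + 1] (a * b) = 0 := by
  set D := dhat k n
  have ha' : ∀ j, s + 1 ≤ j → (⇑D)^[j] a = 0 :=
    fun j hj => deriv_iterate_zero_of_le D a (s + 1) j has' hj
  have hb' : ∀ j, t + 1 ≤ j → (⇑D)^[j] b = 0 :=
    fun j hj => deriv_iterate_zero_of_le D b (t + 1) j hbt' hj
  constructor
  · rw [deriv_iterate_leibniz]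
    rw [Finset.sum_eq_single t]
    · simp only [Nat.add_sub_cancel]
      intro h
      rcases smul_eq_zero.mp h with h1 | h2
      · exact absurd h1 (Nat.choose_pos (Nat.le_add_left t s)).ne'
      · rcases mul_eq_zero.mp h2 with h3 | h4
        · exact has h3
        · exact hbt h4
    · intro i hi hit
      rw [mem_range] at hi
      rcases lt_or_gt_of_ne hit with h | h
      · rw [ha' (s + t - i) (by omega), zero_mul, smul_zero]
      · rw [hb' i (by omega), mul_zero, smul_zero]
    · intro h
      exact absurd (mem_range.mpr (by omega)) h
  · rw [deriv_iterate_leibniz]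
    refine Finset.sum_eq_zero fun i hi => ?_
    rw [mem_range] at hi
    by_cases h : i ≤ t
    · rw [ha' (s + t + 1 - i) (by omega), zero_mul, smul_zero]
    · rw [hb' i (by omega), mul_zero, smul_zero]
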